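/- arXiv:1712.07915 — 2 statements merged into one kernel-verified Lean document; each statement's English description precedes it below -/
import Mathlib

section
/- Let N ≥ 2, let D ∈ ℝ^{N×m} be a matrix each of whose columns sums to zero, let λ > 0 satisfy eᵀ(D Dᵀ)e ≥ λ‖e‖₂² for every e ∈ ℝ^N with Σᵢ eᵢ = 0, let Π = I_N − (1/N)𝟏𝟏ᵀ, fix β₁ > 0 and ω₀ ≥ 0 with β₁·√λ > ω₀. Then for every δ₀ > 0 there exists β₂* > 0 such that for every β₂ ≥ β₂*, every continuous Ω : [0,∞) → ℝ^N with ‖Π Ω(t)‖₂ ≤ ω₀ for all t, and every continuously differentiable x : [0,∞) → ℝ^N satisfying ẋ(t) = −β₁ D tanh(β₂ Dᵀ x(t)) + Ω(t), there exists T ≥ 0 with |x_i(t) − x_j(t)| ≤ δ₀ for all indices i, j and all t ≥ T. That is, by choosing the gain β₂ large enough, the eventual consensus error can be made as small as desired. -/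
/-!
Let `e = Π x` be the consensus error and `V = ‖e‖²`. Since the columns of `D` sum to zero,
`Dᵀ e = Dᵀ x =: z`, so the protocol contributes `-2 β₁ ∑ₖ zₖ tanh (β₂ zₖ)` to `V'`. The bound
`|y| - 1/β₂ ≤ y tanh (β₂ y)` together with `‖z‖₁ ≥ ‖z‖₂ ≥ √λ ‖e‖` and Cauchy–Schwarz for the
perturbation gives `V' ≤ -2 (β₁ √λ - ω₀) ‖e‖ + 2 β₁ m / β₂`. Once `β₂` is large, `V` therefore
decreases at a uniform rate while `‖e‖ ≥ δ₀ / 2`, so it enters and never leaves the ball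
`‖e‖ ≤ δ₀ / 2`, on which all pairwise disagreements are at most `δ₀`.
-/

open Finset Matrix

namespace Real

lemma sub_one_le_mul_tanh (u : ℝ) : u - 1 ≤ u * tanh u := by
  have hexp : u * exp (-u) ≤ 1 :=
    calc u * exp (-u) ≤ exp u * exp (-u) := by
          gcongr; linarith [add_one_le_exp u]
      _ = 1 := by rw [← exp_add, add_neg_cancel, exp_zero]
  have h : u * (cosh u - sinh u) ≤ cosh u := by
    rw [cosh_sub_sinh]; linarith [one_le_cosh u]
  rw [tanh_eq_sinh_div_cosh, mul_div_assoc', le_div_iff₀ (cosh_pos u)]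
  linear_combination h

lemma abs_sub_one_le_mul_tanh (u : ℝ) : |u| - 1 ≤ u * tanh u := by
  rcases abs_cases u with ⟨hu, -⟩ | ⟨hu, -⟩
  · rw [hu]; exact sub_one_le_mul_tanh u
  · simpa [hu, tanh_neg] using sub_one_le_mul_tanh (-u)

lemma abs_sub_inv_le_mul_tanh_mul {β : ℝ} (hβ : 0 < β) (y : ℝ) :
    |y| - β⁻¹ ≤ y * tanh (β * y) := by
  have h := abs_sub_one_le_mul_tanh (β * y)
  rw [abs_mul, abs_of_pos hβ] at h
  refine le_of_mul_le_mul_left ?_ hβ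
  rw [mul_sub, mul_inv_cancel₀ hβ.ne']
  linear_combination h

lemma sqrt_sum_sq_sub_le_sum_mul_tanh_mul {κ : Type*} [Fintype κ] {β : ℝ} (hβ : 0 < β)
    (z : κ → ℝ) : √(∑ k, z k ^ 2) - Fintype.card κ / β ≤ ∑ k, z k * tanh (β * z k) := by
  have hl2_le_l1 : √(∑ k, z k ^ 2) ≤ ∑ k, |z k| := by
    rw [sqrt_le_iff]
    refine ⟨by positivity, ?_⟩
    simpa only [sq_abs] using sum_sq_le_sq_sum_of_nonneg fun k _ => abs_nonneg (z k)
  calc √(∑ k, z k ^ 2) - Fintype.card κ / β ≤ ∑ k, (|z k| - β⁻¹) := by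
        rw [sum_sub_distrib, sum_const, card_univ, nsmul_eq_mul, div_eq_mul_inv]
        linarith
    _ ≤ ∑ k, z k * tanh (β * z k) := sum_le_sum fun k _ => abs_sub_inv_le_mul_tanh_mul hβ (z k)

end Real

section Lyapunov

variable {V V' : ℝ → ℝ} {B ε : ℝ}

lemma le_of_hasDerivAt_neg_of_eq {t₀ : ℝ} (hV : ∀ t, t₀ ≤ t → HasDerivAt V (V' t) t)
    (hV' : ∀ t, t₀ ≤ t → V t = B → V' t < 0) (h₀ : V t₀ ≤ B) {t : ℝ} (ht : t₀ ≤ t) :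
    V t ≤ B :=
  image_le_of_deriv_right_lt_deriv_boundary (B := fun _ => B) (B' := fun _ => 0)
    (fun s hs => (hV s hs.1).continuousAt.continuousWithinAt)
    (fun s hs => (hV s hs.1).hasDerivWithinAt) h₀ (fun _ => hasDerivAt_const _ _)
    (fun s hs => hV' s hs.1) ⟨ht, le_rfl⟩

lemma exists_le_of_hasDerivAt_le_neg (hε : 0 < ε) (hV : ∀ t, 0 ≤ t → HasDerivAt V (V' t) t)
    (hV_nonneg : ∀ t, 0 ≤ t → 0 ≤ V t) (hV' : ∀ t, 0 ≤ t → B ≤ V t → V' t ≤ -ε) :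
    ∃ t, 0 ≤ t ∧ V t ≤ B := by
  by_contra! h
  have hT : 0 ≤ V 0 / ε + 1 := by have := hV_nonneg 0 le_rfl; positivity
  have hline : ∀ s, HasDerivAt (fun t => V 0 - ε * t) (-ε) s := fun s => by
    simpa using ((hasDerivAt_id s).const_mul ε).const_sub (V 0)
  have hdecay := image_le_of_deriv_right_le_deriv_boundary (b := V 0 / ε + 1)
    (fun s hs => (hV s hs.1).continuousAt.continuousWithinAt)
    (fun s hs => (hV s hs.1).hasDerivWithinAt) (by simp)
    (fun s _ => (hline s).continuousAt.continuousWithinAt) (fun s _ => (hline s).hasDerivWithinAt)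
    (fun s hs => hV' s hs.1 (h s hs.1).le) ⟨hT, le_rfl⟩
  rw [mul_add, mul_div_cancel₀ _ hε.ne'] at hdecay
  linarith [hV_nonneg _ hT]

lemma eventually_le_of_hasDerivAt_le_neg (hε : 0 < ε)
    (hV : ∀ t, 0 ≤ t → HasDerivAt V (V' t) t) (hV_nonneg : ∀ t, 0 ≤ t → 0 ≤ V t)
    (hV' : ∀ t, 0 ≤ t → B ≤ V t → V' t ≤ -ε) : ∃ T, 0 ≤ T ∧ ∀ t, T ≤ t → V t ≤ B := by
  obtain ⟨T, hT, hVT⟩ := exists_le_of_hasDerivAt_le_neg hε hV hV_nonneg hV'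
  exact ⟨T, hT, fun t ht => le_of_hasDerivAt_neg_of_eq (fun s hs => hV s (hT.trans hs))
    (fun s hs hs' => (hV' s (hT.trans hs) hs'.ge).trans_lt (neg_neg_of_pos hε)) hVT ht⟩

end Lyapunov

section Consensus

variable {n : ℕ}

/-- The projection `Π v = v - (1/n) 𝟏 𝟏ᵀ v`. -/
noncomputable def centered (v : Fin n → ℝ) : Fin n → ℝ := fun i => v i - (∑ j, v j) / n

lemma sum_centered (v : Fin n → ℝ) : ∑ i, centered v i = 0 := by
  rcases Nat.eq_zero_or_pos n with rfl | hn
  · simp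
  · simp only [centered, sum_sub_distrib, sum_const, card_univ, Fintype.card_fin, nsmul_eq_mul]
    field_simp
    ring

lemma sum_centered_mul_centered (u v : Fin n → ℝ) :
    ∑ i, centered u i * centered v i = ∑ i, centered u i * v i := by
  have hv : ∀ i, centered v i = v i - (∑ j, v j) / n := fun _ => rfl
  simp_rw [hv, mul_sub, sum_sub_distrib, ← sum_mul, sum_centered, zero_mul, sub_zero]

lemma sum_centered_mul_le (u v : Fin n → ℝ) :
    ∑ i, centered u i * v i ≤ √(∑ i, centered u i ^ 2) * √(∑ i, centered v i ^ 2) := by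
  rw [← sum_centered_mul_centered]
  exact Real.sum_mul_le_sqrt_mul_sqrt _ _ _

lemma abs_sub_le_of_sum_centered_sq_le {v : Fin n → ℝ} {r : ℝ} (hr : 0 ≤ r)
    (hv : ∑ i, centered v i ^ 2 ≤ r ^ 2) (i j : Fin n) : |v i - v j| ≤ 2 * r := by
  have hle : ∀ i, |centered v i| ≤ r := fun i => abs_le_of_sq_le_sq
    ((single_le_sum (fun i _ => sq_nonneg (centered v i)) (mem_univ i)).trans hv) hr
  calc |v i - v j| = |centered v i - centered v j| := by
        simp only [centered, sub_sub_sub_cancel_right]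
    _ ≤ |centered v i| + |centered v j| := abs_sub _ _
    _ ≤ 2 * r := by linarith [hle i, hle j]

lemma hasDerivAt_sum_centered_sq {x : ℝ → Fin n → ℝ} {f : Fin n → ℝ} {t : ℝ}
    (hx : ∀ i, HasDerivAt (fun s => x s i) (f i) t) :
    HasDerivAt (fun s => ∑ i, centered (x s) i ^ 2) (2 * ∑ i, centered (x t) i * f i) t := by
  have hc : ∀ i, HasDerivAt (fun s => centered (x s) i) (centered f i) t := fun i =>
    (hx i).sub ((HasDerivAt.fun_sum fun j _ => hx j).div_const _)
  refine (HasDerivAt.fun_sum fun i _ => (hc i).pow 2).congr_deriv ?_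
  rw [← sum_centered_mul_centered, mul_sum]
  refine sum_congr rfl fun i _ => ?_
  push_cast
  ring

variable {κ : Type*} {D : Matrix (Fin n) κ ℝ}

lemma mulVec_transpose_centered (hD : ∀ k, ∑ i, D i k = 0) (v : Fin n → ℝ) :
    Dᵀ *ᵥ centered v = Dᵀ *ᵥ v := by
  ext k
  simp only [mulVec, dotProduct, transpose_apply, centered, mul_sub, sum_sub_distrib,
    ← sum_mul, hD, zero_mul, sub_zero]

variable [Fintype κ]

lemma dotProduct_mul_transpose_mulVec (e : Fin n → ℝ) :
    e ⬝ᵥ (D * Dᵀ) *ᵥ e = ∑ k, (Dᵀ *ᵥ e) k ^ 2 := by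
  rw [← mulVec_mulVec, dotProduct_mulVec, ← mulVec_transpose]
  simp only [dotProduct, sq]

lemma sum_centered_mul_mulVec (hD : ∀ k, ∑ i, D i k = 0) (v : Fin n → ℝ) (w : κ → ℝ) :
    ∑ i, centered v i * (D *ᵥ w) i = ∑ k, (Dᵀ *ᵥ v) k * w k := by
  have h := dotProduct_mulVec (centered v) D w
  rwa [← mulVec_transpose, mulVec_transpose_centered hD] at h

lemma sqrt_mul_sqrt_sum_centered_sq_le {lam : ℝ} (hD : ∀ k, ∑ i, D i k = 0)
    (hspec : ∀ e : Fin n → ℝ, ∑ i, e i = 0 → lam * ∑ i, e i ^ 2 ≤ e ⬝ᵥ (D * Dᵀ) *ᵥ e)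
    (v : Fin n → ℝ) :
    √lam * √(∑ i, centered v i ^ 2) ≤ √(∑ k, (Dᵀ *ᵥ v) k ^ 2) := by
  rw [← Real.sqrt_mul' _ (sum_nonneg fun i _ => sq_nonneg _)]
  refine Real.sqrt_le_sqrt ?_
  have h := hspec (centered v) (sum_centered v)
  rwa [dotProduct_mul_transpose_mulVec, mulVec_transpose_centered hD] at h

lemma sum_centered_mul_drift_le {lam β₁ β₂ ω₀ : ℝ} (hD : ∀ k, ∑ i, D i k = 0)
    (hspec : ∀ e : Fin n → ℝ, ∑ i, e i = 0 → lam * ∑ i, e i ^ 2 ≤ e ⬝ᵥ (D * Dᵀ) *ᵥ e)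
    (hβ₁ : 0 ≤ β₁) (hβ₂ : 0 < β₂) (x Ω : Fin n → ℝ) (hΩ : √(∑ i, centered Ω i ^ 2) ≤ ω₀) :
    ∑ i, centered x i * (-β₁ * (D *ᵥ fun k => Real.tanh (β₂ * (Dᵀ *ᵥ x) k)) i + Ω i)
      ≤ -(β₁ * √lam - ω₀) * √(∑ i, centered x i ^ 2) + β₁ * (Fintype.card κ / β₂) := by
  set E := √(∑ i, centered x i ^ 2)
  have hcoupling : √lam * E - Fintype.card κ / β₂
      ≤ ∑ k, (Dᵀ *ᵥ x) k * Real.tanh (β₂ * (Dᵀ *ᵥ x) k) :=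
    (sub_le_sub_right (sqrt_mul_sqrt_sum_centered_sq_le hD hspec x) _).trans
      (Real.sqrt_sum_sq_sub_le_sum_mul_tanh_mul hβ₂ _)
  have hperturbation : ∑ i, centered x i * Ω i ≤ E * ω₀ :=
    (sum_centered_mul_le x Ω).trans (mul_le_mul_of_nonneg_left hΩ (Real.sqrt_nonneg _))
  calc _ = -β₁ * ∑ k, (Dᵀ *ᵥ x) k * Real.tanh (β₂ * (Dᵀ *ᵥ x) k)
        + ∑ i, centered x i * Ω i := by
        simp only [mul_add, sum_add_distrib, mul_left_comm _ (-β₁), ← mul_sum,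
          sum_centered_mul_mulVec hD]
    _ ≤ -β₁ * (√lam * E - Fintype.card κ / β₂) + E * ω₀ := by
        linarith [mul_le_mul_of_nonneg_left hcoupling hβ₁]
    _ = _ := by ring

end Consensus

theorem consensus_error_arbitrarily_small_general
    (N m : ℕ)
    (D : Matrix (Fin N) (Fin m) ℝ)
    (hDcol : ∀ k : Fin m, ∑ i, D i k = 0)
    (lam : ℝ)
    (hspec : ∀ e : Fin N → ℝ, (∑ i, e i) = 0 →
      lam * ∑ i, (e i) ^ 2 ≤ dotProduct e ((D * D.transpose).mulVec e))
    (β₁ ω₀ : ℝ) (hβ₁ : 0 < β₁)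
    (hgain : ω₀ < β₁ * Real.sqrt lam) :
    ∀ δ₀ : ℝ, 0 < δ₀ →
      ∃ β₂star : ℝ, 0 < β₂star ∧
        ∀ β₂ : ℝ, β₂star ≤ β₂ →
          ∀ Ω : ℝ → Fin N → ℝ, ContinuousOn Ω (Set.Ici 0) →
            (∀ t : ℝ, 0 ≤ t →
              Real.sqrt (∑ i, (Ω t i - (∑ j, Ω t j) / N) ^ 2) ≤ ω₀) →
            ∀ x : ℝ → Fin N → ℝ,
              (∀ t : ℝ, 0 ≤ t → ∀ i : Fin N,
                HasDerivAt (fun s => x s i)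
                  (-β₁ * ∑ k, D i k * Real.tanh (β₂ * ∑ j, D j k * x t j) + Ω t i) t) →
              ∃ T : ℝ, 0 ≤ T ∧ ∀ t : ℝ, T ≤ t →
                ∀ i j : Fin N, |x t i - x t j| ≤ δ₀ := by
  intro δ₀ hδ₀
  have hc : 0 < β₁ * √lam - ω₀ := sub_pos.mpr hgain
  refine ⟨4 * β₁ * (m + 1) / ((β₁ * √lam - ω₀) * δ₀), by positivity,
    fun β₂ hβ₂ Ω _ hΩ x hx => ?_⟩
  have hβ₂_pos : 0 < β₂ := lt_of_lt_of_le (by positivity) hβ₂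
  have hmargin : β₁ * (m / β₂) ≤ (β₁ * √lam - ω₀) * δ₀ / 4 := by
    rw [div_le_iff₀ (by positivity)] at hβ₂
    rw [mul_div_assoc', div_le_iff₀ hβ₂_pos]
    linarith
  have hx' : ∀ t, 0 ≤ t → ∀ i, HasDerivAt (fun s => x s i)
      (-β₁ * (D *ᵥ fun k => Real.tanh (β₂ * (Dᵀ *ᵥ x t) k)) i + Ω t i) t := hx
  obtain ⟨T, hT, hV⟩ := eventually_le_of_hasDerivAt_le_neg (B := (δ₀ / 2) ^ 2)
    (ε := (β₁ * √lam - ω₀) * δ₀ / 2) (by positivity)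
    (fun t ht => hasDerivAt_sum_centered_sq (hx' t ht)) (fun t _ => by positivity)
    fun t ht hB => by
      have hE := mul_le_mul_of_nonneg_left (Real.le_sqrt_of_sq_le hB) hc.le
      have hdrift := sum_centered_mul_drift_le hDcol hspec hβ₁.le hβ₂_pos (x t) (Ω t) (hΩ t ht)
      rw [Fintype.card_fin] at hdrift
      linarith
  exact ⟨T, hT, fun t ht i j =>
    (abs_sub_le_of_sum_centered_sq_le (by positivity) (hV t ht) i j).trans_eq
      (mul_div_cancel₀ δ₀ two_ne_zero)⟩

/-- By choosing the gain β₂ large enough, the eventual consensus error of the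
tanh-based single-integrator protocol can be made as small as desired. -/
theorem consensus_error_arbitrarily_small
    (N m : ℕ) (hN : 2 ≤ N)
    (D : Matrix (Fin N) (Fin m) ℝ)
    (hDcol : ∀ k : Fin m, ∑ i, D i k = 0)
    (lam : ℝ) (hlam : 0 < lam)
    (hspec : ∀ e : Fin N → ℝ, (∑ i, e i) = 0 →
      lam * ∑ i, (e i) ^ 2 ≤ dotProduct e ((D * D.transpose).mulVec e))
    (β₁ ω₀ : ℝ) (hβ₁ : 0 < β₁) (hω₀ : 0 ≤ ω₀)
    (hgain : ω₀ < β₁ * Real.sqrt lam) :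
    ∀ δ₀ : ℝ, 0 < δ₀ →
      ∃ β₂star : ℝ, 0 < β₂star ∧
        ∀ β₂ : ℝ, β₂star ≤ β₂ →
          ∀ Ω : ℝ → Fin N → ℝ, ContinuousOn Ω (Set.Ici 0) →
            (∀ t : ℝ, 0 ≤ t →
              Real.sqrt (∑ i, (Ω t i - (∑ j, Ω t j) / N) ^ 2) ≤ ω₀) →
            ∀ x : ℝ → Fin N → ℝ,
              (∀ t : ℝ, 0 ≤ t → ∀ i : Fin N,
                HasDerivAt (fun s => x s i)
                  (-β₁ * ∑ k, D i k * Real.tanh (β₂ * ∑ j, D j k * x t j) + Ω t i) t) →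
              ∃ T : ℝ, 0 ≤ T ∧ ∀ t : ℝ, T ≤ t →
                ∀ i j : Fin N, |x t i - x t j| ≤ δ₀ :=
  consensus_error_arbitrarily_small_general N m D hDcol lam hspec β₁ ω₀ hβ₁ hgain
end

section
/- Let Q : ℝ × [0,∞) → ℝ be twice continuously differentiable with ∂²Q/∂x²(x,t) ≠ 0 for all (x,t), and let x : [0,∞) → ℝ be continuously differentiable and satisfy ẋ(t) = −(∂²Q/∂x²(x(t),t))^{-1}·(∂Q/∂x(x(t),t) + ∂²Q/∂x∂t(x(t),t)) for all t ≥ 0. Then G(t) := ∂Q/∂x(x(t),t) satisfies G′(t) = −G(t) for all t ≥ 0; hence G(t) = G(0)·e^{−t} and G(t) → 0 as t → ∞. -/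
/-!
Along the closed loop, the chain rule gives
`G' = Qxx · ẋ + Qxt = -(Qx + Qxt) + Qxt = -G`: inverting the Hessian in the control law cancels
the drift of the gradient and leaves the linear equation `G' = -G`, whose solutions are
`G 0 · e^{-t}`.
-/

open Real Filter Topology

theorem HasFDerivAt.hasDerivAt_comp_graph {f : ℝ → ℝ → ℝ} {x : ℝ → ℝ} {fx ft v t : ℝ}
    (hf : HasFDerivAt (fun p : ℝ × ℝ => f p.1 p.2)
      (fx • ContinuousLinearMap.fst ℝ ℝ ℝ + ft • ContinuousLinearMap.snd ℝ ℝ ℝ) (x t, t))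
    (hx : HasDerivAt x v t) :
    HasDerivAt (fun s => f (x s) s) (fx * v + ft) t :=
  (hf.comp_hasDerivAt (f := fun s => (x s, s)) t (hx.prodMk (hasDerivAt_id t))).congr_deriv
    (by simp)

theorem eq_mul_exp_of_hasDerivAt_eq_mul_self {G : ℝ → ℝ} {c : ℝ}
    (hG : ∀ t, 0 ≤ t → HasDerivAt G (c * G t) t) {t : ℝ} (ht : 0 ≤ t) :
    G t = G 0 * exp (c * t) := by
  have hderiv : ∀ s, 0 ≤ s → HasDerivAt (fun s => G s * exp (-(c * s))) 0 s := by
    intro s hs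
    have hexp : HasDerivAt (fun s => exp (-(c * s))) (exp (-(c * s)) * -c) s :=
      (((hasDerivAt_id s).const_mul c).neg.exp).congr_deriv (by simp)
    exact ((hG s hs).mul hexp).congr_deriv (by ring)
  have hconst : G t * exp (-(c * t)) = G 0 * exp (-(c * 0)) :=
    constant_of_has_deriv_right_zero
      (fun s hs => (hderiv s hs.1).continuousAt.continuousWithinAt)
      (fun s hs => (hderiv s hs.1).hasDerivWithinAt) t ⟨ht, le_rfl⟩
  rw [mul_zero, neg_zero, exp_zero, mul_one, exp_neg, ← div_eq_mul_inv,
    div_eq_iff (exp_ne_zero _)] at hconst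
  exact hconst

/-- Here `Qx`, `Qxx`, `Qxt` stand for ∂Q/∂x, ∂²Q/∂x² and ∂²Q/∂x∂t, the second order data being
encoded by the total derivative of `Qx`. -/
theorem gradient_decay_centralized_single_integrator_general
    (Qx Qxx Qxt : ℝ → ℝ → ℝ)
    (hQx : ∀ x t : ℝ,
      HasFDerivAt (fun p : ℝ × ℝ => Qx p.1 p.2)
        (Qxx x t • ContinuousLinearMap.fst ℝ ℝ ℝ +
          Qxt x t • ContinuousLinearMap.snd ℝ ℝ ℝ) (x, t))
    (hHess : ∀ x t : ℝ, Qxx x t ≠ 0)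
    (x : ℝ → ℝ)
    (hx : ∀ t : ℝ, 0 ≤ t →
      HasDerivAt x (-(Qxx (x t) t)⁻¹ * (Qx (x t) t + Qxt (x t) t)) t)
    (G : ℝ → ℝ) (hG : G = fun t => Qx (x t) t) :
    (∀ t : ℝ, 0 ≤ t → HasDerivAt G (-G t) t) ∧
    (∀ t : ℝ, 0 ≤ t → G t = G 0 * Real.exp (-t)) ∧
    Filter.Tendsto G Filter.atTop (nhds 0) := by
  have hderiv : ∀ t, 0 ≤ t → HasDerivAt G (-G t) t := by
    intro t ht
    subst hG
    refine ((hQx (x t) t).hasDerivAt_comp_graph (hx t ht)).congr_deriv ?_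
    field_simp [hHess (x t) t]
    ring
  have hsol : ∀ t, 0 ≤ t → G t = G 0 * exp (-t) := fun t ht => by
    simpa using eq_mul_exp_of_hasDerivAt_eq_mul_self (c := -1) (by simpa using hderiv) ht
  refine ⟨hderiv, hsol, ?_⟩
  have hlim : Tendsto (fun t => G 0 * exp (-t)) atTop (𝓝 0) := by
    simpa using tendsto_exp_neg_atTop_nhds_zero.const_mul (G 0)
  exact hlim.congr' (eventually_atTop.2 ⟨0, fun t ht => (hsol t ht).symm⟩)

/-- Gradient decay for the centralized single-integrator control law tracking
the minimizer of a time-varying objective Q. Here `Qx`, `Qxx`, `Qxt` denote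
∂Q/∂x, ∂²Q/∂x² and ∂²Q/∂x∂t, the second order data being encoded by the
total derivative of `Qx`. -/
theorem gradient_decay_centralized_single_integrator
    (Q Qx Qxx Qxt : ℝ → ℝ → ℝ)
    (hQ : ∀ x t : ℝ, HasDerivAt (fun y => Q y t) (Qx x t) x)
    (hQx : ∀ x t : ℝ,
      HasFDerivAt (fun p : ℝ × ℝ => Qx p.1 p.2)
        (Qxx x t • ContinuousLinearMap.fst ℝ ℝ ℝ +
          Qxt x t • ContinuousLinearMap.snd ℝ ℝ ℝ) (x, t))
    (hQxxCont : Continuous (fun p : ℝ × ℝ => Qxx p.1 p.2))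
    (hQxtCont : Continuous (fun p : ℝ × ℝ => Qxt p.1 p.2))
    (hHess : ∀ x t : ℝ, Qxx x t ≠ 0)
    (x : ℝ → ℝ)
    (hx : ∀ t : ℝ, 0 ≤ t →
      HasDerivAt x (-(Qxx (x t) t)⁻¹ * (Qx (x t) t + Qxt (x t) t)) t)
    (G : ℝ → ℝ) (hG : G = fun t => Qx (x t) t) :
    (∀ t : ℝ, 0 ≤ t → HasDerivAt G (-G t) t) ∧
    (∀ t : ℝ, 0 ≤ t → G t = G 0 * Real.exp (-t)) ∧
    Filter.Tendsto G Filter.atTop (nhds 0) :=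
  gradient_decay_centralized_single_integrator_general Qx Qxx Qxt hQx hHess x hx G hG
end
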